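/- If [n]! ≠ 0 in k, then the quantum Schur algebra S(n) is a semisimple ring. -/

import Mathlib

noncomputable section

open scoped TensorProduct

/-- Balanced quantum integer `[m]` for a natural number `m`. -/
def qintN {k : Type*} [Field k] (v : k) (m : ℕ) : k :=
  ∑ t ∈ Finset.range m, v ^ ((m : ℤ) - 1 - 2 * t)

/-- Balanced quantum integer `[m]` for an integer `m`. -/
def qint {k : Type*} [Field k] (v : k) (m : ℤ) : k :=
  if 0 ≤ m then qintN v m.toNat else - qintN v (-m).toNat

/-- Quantum factorial `[m]! = [1][2]⋯[m]`. -/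
def qfact {k : Type*} [Field k] (v : k) (m : ℕ) : k :=
  ∏ j ∈ Finset.range m, qintN v (j + 1)

/-- `X(n) = {i ∈ ℤ : |i| ≤ n, i ≡ n (mod 2)}`. -/
def Xset (n : ℕ) : Finset ℤ :=
  (Finset.Icc (-(n : ℤ)) (n : ℤ)).filter (fun i => i % 2 = (n : ℤ) % 2)

/-- Generators of the quantum Schur algebra: `E`, `F`, and the idempotents
`1_i` (the latter indexed by all integers; those outside `X(n)` are set to
zero by the relations). -/
inductive SchurGen : Type
  | E : SchurGen
  | F : SchurGen
  | unit : ℤ → SchurGen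

variable (k : Type*) [Field k]

/-- The defining relations of the quantum Schur algebra `S(n)`. -/
inductive SchurRel (v : k) (n : ℕ) :
    FreeAlgebra k SchurGen → FreeAlgebra k SchurGen → Prop
  | idem : ∀ i ∈ Xset n, ∀ j ∈ Xset n,
      SchurRel v n
        (FreeAlgebra.ι k (SchurGen.unit i) * FreeAlgebra.ι k (SchurGen.unit j))
        (if i = j then FreeAlgebra.ι k (SchurGen.unit i) else 0)
  | sum_one : SchurRel v n (∑ i ∈ Xset n, FreeAlgebra.ι k (SchurGen.unit i)) 1
  | unit_zero : ∀ i ∉ Xset n, SchurRel v n (FreeAlgebra.ι k (SchurGen.unit i)) 0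
  | comm : SchurRel v n
      (FreeAlgebra.ι k SchurGen.E * FreeAlgebra.ι k SchurGen.F -
        FreeAlgebra.ι k SchurGen.F * FreeAlgebra.ι k SchurGen.E)
      (∑ i ∈ Xset n, qint v i • FreeAlgebra.ι k (SchurGen.unit i))
  | Eu (i : ℤ) : SchurRel v n
      (FreeAlgebra.ι k SchurGen.E * FreeAlgebra.ι k (SchurGen.unit i))
      (FreeAlgebra.ι k (SchurGen.unit (i + 2)) * FreeAlgebra.ι k SchurGen.E)
  | Fu (i : ℤ) : SchurRel v n
      (FreeAlgebra.ι k SchurGen.F * FreeAlgebra.ι k (SchurGen.unit i))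
      (FreeAlgebra.ι k (SchurGen.unit (i - 2)) * FreeAlgebra.ι k SchurGen.F)
  | uE (i : ℤ) : SchurRel v n
      (FreeAlgebra.ι k (SchurGen.unit i) * FreeAlgebra.ι k SchurGen.E)
      (FreeAlgebra.ι k SchurGen.E * FreeAlgebra.ι k (SchurGen.unit (i - 2)))
  | uF (i : ℤ) : SchurRel v n
      (FreeAlgebra.ι k (SchurGen.unit i) * FreeAlgebra.ι k SchurGen.F)
      (FreeAlgebra.ι k SchurGen.F * FreeAlgebra.ι k (SchurGen.unit (i + 2)))

/-- The quantum Schur algebra `S(n)`, presented by generators and relations. -/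
abbrev SchurAlg (v : k) (n : ℕ) := RingQuot (SchurRel k v n)

/-- The generator `E` of `S(n)`. -/
def SE (v : k) (n : ℕ) : SchurAlg k v n :=
  RingQuot.mkAlgHom k (SchurRel k v n) (FreeAlgebra.ι k SchurGen.E)

/-- The generator `F` of `S(n)`. -/
def SF (v : k) (n : ℕ) : SchurAlg k v n :=
  RingQuot.mkAlgHom k (SchurRel k v n) (FreeAlgebra.ι k SchurGen.F)

/-- The generator `1_i` of `S(n)`. -/
def Sunit (v : k) (n : ℕ) (i : ℤ) : SchurAlg k v n :=
  RingQuot.mkAlgHom k (SchurRel k v n) (FreeAlgebra.ι k (SchurGen.unit i))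

/-!
For `r ≤ n / 2` and `m = n - 2r`, the formulas `F x_q = [q+1] x_{q+1}`, `E x_{q+1} = [m-q] x_q`
and `1_i x_q = δ_{i, m-2q} x_q` define a representation of `S(n)` on `k^{m+1}`; the relation
`EF - FE = Σ [i] 1_i` comes down to `[m-p][p+1] - [p][m-p+1] = [m-2p]`. Together these give an
algebra map `S(n) → ∏_r M_{n-2r+1}(k)`. If `[n]! ≠ 0`, every coefficient `[q+1]`, `[m-q]` is
invertible, so multiplying by `E` and `F` moves a corner unit to every matrix unit of its block,
and the map is onto. Conversely the monomials `F^a 1_{n-2s} E^b` with `s + a + b ≤ n` span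
`S(n)`, and there are `Σ_r (n-2r+1)^2` of them, so the map is an isomorphism onto a product of
matrix algebras.
-/

section QuantumInteger

variable {k : Type*} [Field k] {v : k}

lemma qintN_zero (v : k) : qintN v 0 = 0 := by simp [qintN]

lemma zpow_mul_qintN (hv : v ≠ 0) (e : ℤ) (m : ℕ) :
    v ^ e * qintN v m = ∑ t ∈ Finset.range m, v ^ (e + m - 1 - 2 * t) := by
  rw [qintN, Finset.mul_sum]
  refine Finset.sum_congr rfl fun t _ => ?_
  rw [← zpow_add₀ hv]
  ring_nf

lemma qintN_succ (hv : v ≠ 0) (m : ℕ) :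
    qintN v (m + 1) = v ^ (m : ℤ) + v ^ (-1 : ℤ) * qintN v m := by
  rw [zpow_mul_qintN hv, qintN, Finset.sum_range_succ']
  push_cast
  ring_nf

lemma zpow_mul_qintN_add_sub (hv : v ≠ 0) (a c : ℕ) :
    v ^ (a : ℤ) * qintN v (a + c) - v ^ ((a : ℤ) + c) * qintN v a = qintN v c := by
  rw [zpow_mul_qintN hv, zpow_mul_qintN hv, Finset.sum_range_add, qintN]
  push_cast
  ring_nf

lemma qintN_succ_mul_sub (hv : v ≠ 0) (a c : ℕ) :
    qintN v (a + 1) * qintN v (a + c) - qintN v a * qintN v (a + c + 1) = qintN v c := by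
  rw [qintN_succ hv a, qintN_succ hv (a + c), ← zpow_mul_qintN_add_sub hv a c]
  push_cast
  ring

lemma qint_natCast (c : ℕ) : qint v c = qintN v c := by
  simp [qint]

lemma qint_neg_natCast (c : ℕ) : qint v (-c) = -qintN v c := by
  rcases Nat.eq_zero_or_pos c with rfl | hc
  · simp [qint, qintN]
  · simp only [qint, Left.nonneg_neg_iff, Nat.cast_nonpos, neg_neg, Int.toNat_natCast]
    rw [if_neg (by omega)]

/-- The scalar by which `EF - FE` acts on the `p`-th weight vector of the simple module of
highest weight `m`. -/
lemma qintN_sub_mul_succ_sub (hv : v ≠ 0) {p m : ℕ} (hpm : p ≤ m) :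
    qintN v (m - p) * qintN v (p + 1) - qintN v p * qintN v (m - p + 1) =
      qint v ((m : ℤ) - 2 * p) := by
  rcases le_total (2 * p) m with h | h
  · obtain ⟨c, rfl⟩ := Nat.exists_eq_add_of_le h
    have e : 2 * p + c - p = p + c := by omega
    rw [e, show ((2 * p + c : ℕ) : ℤ) - 2 * p = c by push_cast; ring, qint_natCast,
      ← qintN_succ_mul_sub hv p c]
    ring
  · obtain ⟨c, hc⟩ := Nat.exists_eq_add_of_le h
    have e : p = (m - p) + c := by omega
    rw [show (m : ℤ) - 2 * p = -(c : ℕ) by omega, qint_neg_natCast,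
      ← qintN_succ_mul_sub hv (m - p) c, ← e]
    ring

lemma qintN_ne_zero_of_qfact_ne_zero {n : ℕ} (hq : qfact v n ≠ 0) {t : ℕ} (h0 : 0 < t)
    (ht : t ≤ n) : qintN v t ≠ 0 := by
  obtain ⟨s, rfl⟩ := Nat.exists_eq_succ_of_ne_zero h0.ne'
  exact Finset.prod_ne_zero_iff.mp hq s (Finset.mem_range.mpr (by omega))

end QuantumInteger

section Relations

variable {k} {v : k} {n : ℕ}

lemma Sunit_eq_zero {i : ℤ} (h : i ∉ Xset n) : Sunit k v n i = 0 :=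
  (RingQuot.mkAlgHom_rel k (SchurRel.unit_zero (v := v) i h)).trans (map_zero _)

lemma Sunit_mul_Sunit (i j : ℤ) :
    Sunit k v n i * Sunit k v n j = if i = j then Sunit k v n i else 0 := by
  by_cases hi : i ∈ Xset n
  · by_cases hj : j ∈ Xset n
    · have h := RingQuot.mkAlgHom_rel k (SchurRel.idem (v := v) i hi j hj)
      rwa [map_mul, apply_ite (RingQuot.mkAlgHom k (SchurRel k v n)), map_zero] at h
    · rw [Sunit_eq_zero hj, mul_zero]
      split_ifs with h
      · exact (Sunit_eq_zero (h ▸ hj)).symm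
      · rfl
  · rw [Sunit_eq_zero hi, zero_mul, ite_self]

lemma sum_Sunit : ∑ i ∈ Xset n, Sunit k v n i = 1 := by
  have h := RingQuot.mkAlgHom_rel k (SchurRel.sum_one (k := k) (v := v) (n := n))
  rwa [map_sum, map_one] at h

lemma SE_mul_SF :
    SE k v n * SF k v n = SF k v n * SE k v n + ∑ i ∈ Xset n, qint v i • Sunit k v n i := by
  have h := RingQuot.mkAlgHom_rel k (SchurRel.comm (k := k) (v := v) (n := n))
  simp only [map_sub, map_mul, map_sum, map_smul] at h
  exact sub_eq_iff_eq_add'.mp h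

lemma SE_mul_Sunit (i : ℤ) : SE k v n * Sunit k v n i = Sunit k v n (i + 2) * SE k v n := by
  have h := RingQuot.mkAlgHom_rel k (SchurRel.Eu (k := k) (v := v) (n := n) i)
  rwa [map_mul, map_mul] at h

lemma SF_mul_Sunit (i : ℤ) : SF k v n * Sunit k v n i = Sunit k v n (i - 2) * SF k v n := by
  have h := RingQuot.mkAlgHom_rel k (SchurRel.Fu (k := k) (v := v) (n := n) i)
  rwa [map_mul, map_mul] at h

lemma Sunit_mul_SF (i : ℤ) : Sunit k v n i * SF k v n = SF k v n * Sunit k v n (i + 2) := by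
  have h := RingQuot.mkAlgHom_rel k (SchurRel.uF (k := k) (v := v) (n := n) i)
  rwa [map_mul, map_mul] at h

lemma SF_pow_mul_Sunit (a : ℕ) (i : ℤ) :
    SF k v n ^ a * Sunit k v n i = Sunit k v n (i - 2 * a) * SF k v n ^ a := by
  induction a generalizing i with
  | zero => simp
  | succ a ih =>
    rw [pow_succ, mul_assoc, SF_mul_Sunit, ← mul_assoc, ih, mul_assoc, ← pow_succ]
    congr 2
    push_cast
    ring

lemma Sunit_mul_SF_pow (a : ℕ) (i : ℤ) :
    Sunit k v n i * SF k v n ^ a = SF k v n ^ a * Sunit k v n (i + 2 * a) := by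
  induction a generalizing i with
  | zero => simp
  | succ a ih =>
    rw [pow_succ, ← mul_assoc, ih, mul_assoc, Sunit_mul_SF, ← mul_assoc, ← pow_succ]
    congr 2
    push_cast
    ring

lemma Sunit_mul_sum_smul_Sunit (i : ℤ) :
    Sunit k v n i * ∑ l ∈ Xset n, qint v l • Sunit k v n l = qint v i • Sunit k v n i := by
  simp only [Finset.mul_sum, mul_smul_comm, Sunit_mul_Sunit, smul_ite, smul_zero]
  rw [Finset.sum_ite_eq]
  split_ifs with h
  · rfl
  · rw [Sunit_eq_zero h, smul_zero]

lemma SE_mul_Sunit_mul_SF (i : ℤ) :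
    SE k v n * Sunit k v n (i - 2) * SF k v n =
      SF k v n * (SE k v n * Sunit k v n i) + qint v i • Sunit k v n i := by
  rw [SE_mul_Sunit, sub_add_cancel, mul_assoc, SE_mul_SF, mul_add, Sunit_mul_sum_smul_Sunit,
    ← mul_assoc, Sunit_mul_SF, mul_assoc, ← sub_add_cancel i 2, ← SE_mul_Sunit,
    sub_add_cancel]

lemma SE_mul_SF_pow_succ_mul_Sunit (a : ℕ) (i : ℤ) :
    SE k v n * (SF k v n ^ (a + 1) * Sunit k v n i) =
      SF k v n ^ (a + 1) * (SE k v n * Sunit k v n i) +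
        (∑ t ∈ Finset.range (a + 1), qint v (i - 2 * t)) •
          (SF k v n ^ a * Sunit k v n i) := by
  induction a generalizing i with
  | zero => simp [← mul_assoc, SF_mul_Sunit, SE_mul_Sunit_mul_SF]
  | succ a ih =>
    have hshift : SE k v n * (SF k v n ^ (a + 1 + 1) * Sunit k v n i) =
        SE k v n * (SF k v n ^ (a + 1) * Sunit k v n (i - 2)) * SF k v n := by
      simp only [pow_succ _ (a + 1), mul_assoc, SF_mul_Sunit]
    have hE : SF k v n ^ (a + 1) * (SE k v n * Sunit k v n (i - 2)) * SF k v n =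
        SF k v n ^ (a + 1 + 1) * (SE k v n * Sunit k v n i) +
          qint v i • (SF k v n ^ (a + 1) * Sunit k v n i) := by
      rw [mul_assoc, SE_mul_Sunit_mul_SF, mul_add, mul_smul_comm, ← mul_assoc, ← pow_succ]
    have hF : SF k v n ^ a * Sunit k v n (i - 2) * SF k v n =
        SF k v n ^ (a + 1) * Sunit k v n i := by
      rw [mul_assoc, Sunit_mul_SF, sub_add_cancel, ← mul_assoc, ← pow_succ]
    rw [hshift, ih, add_mul, smul_mul_assoc, hE, hF, add_assoc, ← add_smul,
      Finset.sum_range_succ' _ (a + 1)]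
    congr 2
    rw [add_comm, Nat.cast_zero, mul_zero, sub_zero]
    congr 1
    refine Finset.sum_congr rfl fun t _ => ?_
    push_cast
    ring_nf

end Relations

def schurMonomial (v : k) (n : ℕ) (a : ℕ) (i : ℤ) (b : ℕ) : SchurAlg k v n :=
  SF k v n ^ a * Sunit k v n i * SE k v n ^ b

def monomialSpan (v : k) (n : ℕ) : Submodule k (SchurAlg k v n) :=
  Submodule.span k
    {x | ∃ s a b : ℕ, s + a + b ≤ n ∧ x = schurMonomial k v n a (n - 2 * s) b}

section Span

variable {k} {v : k} {n : ℕ}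

lemma schurMonomial_mem_monomialSpan {s a b : ℕ} (h : s + a + b ≤ n) :
    schurMonomial k v n a (n - 2 * s) b ∈ monomialSpan k v n :=
  Submodule.subset_span ⟨s, a, b, h, rfl⟩

lemma notMem_Xset {i : ℤ} (h : i < -(n : ℤ) ∨ (n : ℤ) < i) : i ∉ Xset n := by
  simp only [Xset, Finset.mem_filter, Finset.mem_Icc]
  omega

lemma mul_mem_monomialSpan {y : SchurAlg k v n}
    (hy : ∀ s a b : ℕ, s + a + b ≤ n →
      y * schurMonomial k v n a (n - 2 * s) b ∈ monomialSpan k v n)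
    {x : SchurAlg k v n} (hx : x ∈ monomialSpan k v n) : y * x ∈ monomialSpan k v n := by
  refine (Submodule.span_le (p := (monomialSpan k v n).comap (LinearMap.mulLeft k y))).mpr ?_ hx
  rintro _ ⟨s, a, b, h, rfl⟩
  exact hy s a b h

lemma SE_mul_schurMonomial (a b : ℕ) (i : ℤ) :
    SE k v n * schurMonomial k v n a i b =
      schurMonomial k v n a (i + 2) (b + 1) +
        (∑ t ∈ Finset.range a, qint v (i - 2 * t)) • schurMonomial k v n (a - 1) i b := by
  unfold schurMonomial
  cases a with
  | zero =>
    simp only [pow_zero, one_mul, Finset.range_zero, Finset.sum_empty, zero_smul, add_zero]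
    rw [← mul_assoc, SE_mul_Sunit, mul_assoc, ← pow_succ']
  | succ a =>
    rw [← mul_assoc, SE_mul_SF_pow_succ_mul_Sunit, add_mul, smul_mul_assoc, SE_mul_Sunit,
      Nat.add_sub_cancel, pow_succ' (SE k v n)]
    simp only [mul_assoc]

lemma SE_mul_mem_monomialSpan {x : SchurAlg k v n} (hx : x ∈ monomialSpan k v n) :
    SE k v n * x ∈ monomialSpan k v n := by
  refine mul_mem_monomialSpan (fun s a b h => ?_) hx
  rw [SE_mul_schurMonomial]
  refine Submodule.add_mem _ ?_ (Submodule.smul_mem _ _ ?_)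
  · rcases Nat.eq_zero_or_pos s with rfl | hs
    · rw [schurMonomial, Sunit_eq_zero (notMem_Xset (by omega)), mul_zero, zero_mul]
      exact Submodule.zero_mem _
    · obtain ⟨s, rfl⟩ := Nat.exists_eq_succ_of_ne_zero hs.ne'
      convert schurMonomial_mem_monomialSpan (v := v) (n := n) (s := s) (a := a) (b := b + 1)
        (by omega) using 2
      push_cast
      ring
  · exact schurMonomial_mem_monomialSpan (by omega)

lemma Sunit_mul_mem_monomialSpan (l : ℤ) {x : SchurAlg k v n} (hx : x ∈ monomialSpan k v n) :
    Sunit k v n l * x ∈ monomialSpan k v n := by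
  refine mul_mem_monomialSpan (fun s a b h => ?_) hx
  rw [schurMonomial, ← mul_assoc, ← mul_assoc, Sunit_mul_SF_pow, mul_assoc (SF k v n ^ a),
    Sunit_mul_Sunit]
  split_ifs with hl
  · rw [hl]
    exact schurMonomial_mem_monomialSpan h
  · rw [mul_zero, zero_mul]
    exact Submodule.zero_mem _

/-- Up to a monomial of the span, `F^(a+1) 1_{n-2s} E^(b+1)` is `E` times the monomial
`F^(a+1) 1_{n-2s-2} E^b` of the same layer; at `b = 0` the weight `n-2s-2(a+1)` is below `-n`. -/
lemma schurMonomial_succ_mem_monomialSpan {s a b : ℕ} (h : s + a + b = n) :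
    schurMonomial k v n (a + 1) (n - 2 * s) b ∈ monomialSpan k v n := by
  induction b generalizing s with
  | zero =>
    rw [schurMonomial, pow_zero, mul_one, SF_pow_mul_Sunit,
      Sunit_eq_zero (notMem_Xset (by omega)), zero_mul]
    exact Submodule.zero_mem _
  | succ b ih =>
    have hweight : ((n : ℤ) - 2 * (s + 1 : ℕ)) + 2 = n - 2 * s := by push_cast; ring
    have hE := SE_mul_schurMonomial (v := v) (n := n) (a + 1) b (n - 2 * (s + 1 : ℕ))
    rw [hweight, Nat.add_sub_cancel] at hE
    rw [eq_sub_of_add_eq hE.symm]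
    exact Submodule.sub_mem _ (SE_mul_mem_monomialSpan (ih (by omega)))
      (Submodule.smul_mem _ _ (schurMonomial_mem_monomialSpan (by omega)))

lemma SF_mul_mem_monomialSpan {x : SchurAlg k v n} (hx : x ∈ monomialSpan k v n) :
    SF k v n * x ∈ monomialSpan k v n := by
  refine mul_mem_monomialSpan (fun s a b h => ?_) hx
  have hF : SF k v n * schurMonomial k v n a (n - 2 * s) b =
      schurMonomial k v n (a + 1) (n - 2 * s) b := by
    simp only [schurMonomial, ← mul_assoc, ← pow_succ']
  rw [hF]
  rcases h.lt_or_eq with hlt | heq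
  · exact schurMonomial_mem_monomialSpan (by omega)
  · exact schurMonomial_succ_mem_monomialSpan heq

lemma one_mem_monomialSpan : (1 : SchurAlg k v n) ∈ monomialSpan k v n := by
  rw [← sum_Sunit]
  refine Submodule.sum_mem _ fun i hi => ?_
  simp only [Xset, Finset.mem_filter, Finset.mem_Icc] at hi
  obtain ⟨s, hs, rfl⟩ : ∃ s : ℕ, s ≤ n ∧ i = n - 2 * s :=
    ⟨((n : ℤ) - i).toNat / 2, by omega, by omega⟩
  simpa [schurMonomial] using schurMonomial_mem_monomialSpan (v := v) (a := 0) (b := 0)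
    (by omega : s + 0 + 0 ≤ n)

lemma monomialSpan_eq_top : monomialSpan k v n = ⊤ := by
  have hmul : ∀ w : FreeAlgebra k SchurGen, ∀ y ∈ monomialSpan k v n,
      RingQuot.mkAlgHom k (SchurRel k v n) w * y ∈ monomialSpan k v n := by
    intro w
    induction w using FreeAlgebra.induction with
    | grade0 c =>
      intro y hy
      rw [AlgHom.commutes, Algebra.algebraMap_eq_smul_one, smul_mul_assoc, one_mul]
      exact Submodule.smul_mem _ c hy
    | grade1 g =>
      cases g with
      | E => exact fun y => SE_mul_mem_monomialSpan
      | F => exact fun y => SF_mul_mem_monomialSpan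
      | unit i => exact fun y => Sunit_mul_mem_monomialSpan i
    | mul u w hu hw =>
      intro y hy
      rw [map_mul, mul_assoc]
      exact hu _ (hw y hy)
    | add u w hu hw =>
      intro y hy
      rw [map_add, add_mul]
      exact Submodule.add_mem _ (hu y hy) (hw y hy)
  refine eq_top_iff.mpr fun x _ => ?_
  obtain ⟨w, rfl⟩ := RingQuot.mkAlgHom_surjective k (SchurRel k v n) x
  simpa using hmul w 1 one_mem_monomialSpan

end Span

abbrev Blocks (n : ℕ) :=
  ∀ r : Fin (n / 2 + 1), Matrix (Fin (n - 2 * r + 1)) (Fin (n - 2 * r + 1)) k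

/-- In block `r`, `blockE`, `blockF` and `blockUnit` act on the simple module of highest weight
`m = n - 2r`, in its basis `x_0, …, x_m` of weight vectors (of weights `m - 2q`), by
`F x_q = [q+1] x_{q+1}`, `E x_{q+1} = [m-q] x_q` and `1_i x_q = δ_{i, m-2q} x_q`. -/
def blockE (v : k) (n : ℕ) : Blocks k n :=
  fun r => Matrix.of fun p q => if (p : ℕ) + 1 = q then qintN v (n - 2 * r - p) else 0

def blockF (v : k) (n : ℕ) : Blocks k n :=
  fun _ => Matrix.of fun p q => if (p : ℕ) = q + 1 then qintN v p else 0

def blockUnit (n : ℕ) (i : ℤ) : Blocks k n :=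
  fun r => Matrix.diagonal fun q => if (n : ℤ) - 2 * r - 2 * q = i then 1 else 0

section BlockRelations

variable {k} {v : k} {n : ℕ}

lemma weight_mem_Xset (r : Fin (n / 2 + 1)) (q : Fin (n - 2 * r + 1)) :
    (n : ℤ) - 2 * r - 2 * q ∈ Xset n := by
  have := r.isLt
  have := q.isLt
  simp only [Xset, Finset.mem_filter, Finset.mem_Icc]
  omega

lemma blockUnit_mul_blockUnit (i j : ℤ) :
    blockUnit k n i * blockUnit k n j = if i = j then blockUnit k n i else 0 := by
  funext r
  split_ifs with hij
  · subst hij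
    simp [blockUnit, Matrix.diagonal_mul_diagonal]
  · ext p q
    simp only [blockUnit, Pi.mul_apply, Matrix.diagonal_mul_diagonal, Matrix.diagonal_apply,
      Pi.zero_apply, Matrix.zero_apply]
    split_ifs <;> first | rfl | omega | simp

lemma Fin.sum_ite_val_eq {R : Type*} [AddCommMonoid R] {m : ℕ} (a : ℕ) (g : Fin m → R) :
    ∑ j : Fin m, (if (j : ℕ) = a then g j else 0) = if h : a < m then g ⟨a, h⟩ else 0 := by
  split_ifs with h
  · have hval (j : Fin m) : (j : ℕ) = a ↔ j = ⟨a, h⟩ := by simp [Fin.ext_iff]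
    simp_rw [hval]
    exact Fintype.sum_ite_eq' _ _
  · exact Finset.sum_eq_zero fun j _ => if_neg (by omega)

lemma blockE_mul_blockF_apply (r : Fin (n / 2 + 1)) :
    (blockE k v n * blockF k v n) r =
      Matrix.diagonal fun p : Fin _ => qintN v (n - 2 * r - p) * qintN v (p + 1) := by
  ext p q
  simp only [Pi.mul_apply, Matrix.mul_apply, blockE, blockF, Matrix.of_apply, ite_mul, zero_mul,
    eq_comm (a := (p : ℕ) + 1), Fin.sum_ite_val_eq, Matrix.diagonal_apply, Fin.ext_iff]
  split_ifs <;> first | rfl | omega | simp_all [qintN_zero]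

lemma blockF_mul_blockE_apply (r : Fin (n / 2 + 1)) :
    (blockF k v n * blockE k v n) r =
      Matrix.diagonal fun p : Fin _ => qintN v p * qintN v (n - 2 * r - p + 1) := by
  ext p q
  simp only [Pi.mul_apply, Matrix.mul_apply, blockE, blockF, Matrix.of_apply, ite_mul, zero_mul]
  rcases p with ⟨_ | p, hp⟩
  · simp [Matrix.diagonal_apply, qintN_zero]
  · simp only [Nat.add_right_cancel_iff, eq_comm (a := p), Fin.sum_ite_val_eq,
      Matrix.diagonal_apply, Fin.ext_iff]
    rw [dif_pos (by omega)]
    split_ifs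
    · congr 2
      omega
    · rw [mul_zero]

lemma sum_smul_blockUnit_apply (f : ℤ → k) (r : Fin (n / 2 + 1)) :
    (∑ i ∈ Xset n, f i • blockUnit k n i) r =
      Matrix.diagonal fun q : Fin _ => f ((n : ℤ) - 2 * r - 2 * q) := by
  ext p q
  rw [Finset.sum_apply, Matrix.sum_apply]
  simp only [Pi.smul_apply, Matrix.smul_apply, blockUnit, Matrix.diagonal_apply]
  split_ifs with hpq
  · simp [Finset.sum_ite_eq, weight_mem_Xset]
  · simp

lemma sum_blockUnit : ∑ i ∈ Xset n, blockUnit k n i = 1 := by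
  funext r
  simpa using sum_smul_blockUnit_apply (k := k) (n := n) 1 r

lemma blockE_mul_blockF_sub (hv : v ≠ 0) :
    blockE k v n * blockF k v n - blockF k v n * blockE k v n =
      ∑ i ∈ Xset n, qint v i • blockUnit k n i := by
  funext r
  rw [Pi.sub_apply, blockE_mul_blockF_apply, blockF_mul_blockE_apply, sum_smul_blockUnit_apply,
    Matrix.diagonal_sub]
  congr 1
  funext p
  have := r.isLt
  rw [qintN_sub_mul_succ_sub hv (by omega : (p : ℕ) ≤ n - 2 * r)]
  congr 1
  omega

lemma blockUnit_eq_zero {i : ℤ} (hi : i ∉ Xset n) : blockUnit k n i = 0 := by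
  funext r
  refine Matrix.diagonal_eq_zero.mpr (funext fun q => if_neg ?_)
  rintro rfl
  exact hi (weight_mem_Xset r q)

lemma blockE_mul_blockUnit (i : ℤ) :
    blockE k v n * blockUnit k n i = blockUnit k n (i + 2) * blockE k v n := by
  funext r
  ext p q
  simp only [Pi.mul_apply, blockE, blockUnit, Matrix.mul_diagonal, Matrix.diagonal_mul,
    Matrix.of_apply, mul_ite, ite_mul, mul_one, mul_zero, one_mul, zero_mul]
  split_ifs <;> first | rfl | omega

lemma blockF_mul_blockUnit (i : ℤ) :
    blockF k v n * blockUnit k n i = blockUnit k n (i - 2) * blockF k v n := by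
  funext r
  ext p q
  simp only [Pi.mul_apply, blockF, blockUnit, Matrix.mul_diagonal, Matrix.diagonal_mul,
    Matrix.of_apply, mul_ite, ite_mul, mul_one, mul_zero, one_mul, zero_mul]
  split_ifs <;> first | rfl | omega

lemma blockUnit_mul_blockE (i : ℤ) :
    blockUnit k n i * blockE k v n = blockE k v n * blockUnit k n (i - 2) := by
  funext r
  ext p q
  simp only [Pi.mul_apply, blockE, blockUnit, Matrix.mul_diagonal, Matrix.diagonal_mul,
    Matrix.of_apply, mul_ite, ite_mul, mul_one, mul_zero, one_mul, zero_mul]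
  split_ifs <;> first | rfl | omega

lemma blockUnit_mul_blockF (i : ℤ) :
    blockUnit k n i * blockF k v n = blockF k v n * blockUnit k n (i + 2) := by
  funext r
  ext p q
  simp only [Pi.mul_apply, blockF, blockUnit, Matrix.mul_diagonal, Matrix.diagonal_mul,
    Matrix.of_apply, mul_ite, ite_mul, mul_one, mul_zero, one_mul, zero_mul]
  split_ifs <;> first | rfl | omega

end BlockRelations

def blockGen (v : k) (n : ℕ) : SchurGen → Blocks k n
  | .E => blockE k v n
  | .F => blockF k v n
  | .unit i => blockUnit k n i

section BlockRep

variable {k} {v : k} {n : ℕ}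

lemma lift_blockGen_eq_of_schurRel (hv : v ≠ 0) ⦃x y : FreeAlgebra k SchurGen⦄
    (h : SchurRel k v n x y) :
    FreeAlgebra.lift k (blockGen k v n) x = FreeAlgebra.lift k (blockGen k v n) y := by
  cases h with
  | idem i _ j _ =>
    simp only [map_mul, apply_ite (FreeAlgebra.lift k (blockGen k v n)), map_zero,
      FreeAlgebra.lift_ι_apply, blockGen, blockUnit_mul_blockUnit]
  | sum_one => simp [blockGen, sum_blockUnit]
  | unit_zero i hi => simp [blockGen, blockUnit_eq_zero hi]
  | comm => simp [blockGen, blockE_mul_blockF_sub hv]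
  | Eu i => simp [blockGen, blockE_mul_blockUnit]
  | Fu i => simp [blockGen, blockF_mul_blockUnit]
  | uE i => simp [blockGen, blockUnit_mul_blockE]
  | uF i => simp [blockGen, blockUnit_mul_blockF]

variable (v n) in
def blockRep (hv : v ≠ 0) : SchurAlg k v n →ₐ[k] Blocks k n :=
  RingQuot.liftAlgHom k ⟨FreeAlgebra.lift k (blockGen k v n), lift_blockGen_eq_of_schurRel hv⟩

@[simp] lemma blockRep_SE (hv : v ≠ 0) : blockRep v n hv (SE k v n) = blockE k v n := by
  simp [blockRep, SE, blockGen]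

@[simp] lemma blockRep_SF (hv : v ≠ 0) : blockRep v n hv (SF k v n) = blockF k v n := by
  simp [blockRep, SF, blockGen]

@[simp] lemma blockRep_Sunit (hv : v ≠ 0) (i : ℤ) :
    blockRep v n hv (Sunit k v n i) = blockUnit k n i := by
  simp [blockRep, Sunit, blockGen]

end BlockRep

section Surjective

variable {k} {v : k} {n : ℕ}

lemma blockF_mul_single (r : Fin (n / 2 + 1)) (w q : Fin (n - 2 * r + 1))
    (hw : (w : ℕ) + 1 < n - 2 * r + 1) (c : k) :
    blockF k v n * Pi.single r (Matrix.single w q c) =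
      Pi.single r (Matrix.single ⟨w + 1, hw⟩ q (qintN v (w + 1) * c)) := by
  rw [← Pi.single_mul_right]
  congr 1
  ext x y
  by_cases hy : y = q
  · subst hy
    simp only [Matrix.mul_single_apply_same, blockF, Matrix.of_apply, Matrix.single_apply,
      Fin.ext_iff, and_true, eq_comm (a := (w : ℕ) + 1)]
    split_ifs with h
    · rw [h]
    · rw [zero_mul]
  · simp [Matrix.mul_apply, Ne.symm hy]

lemma single_mul_blockE (r : Fin (n / 2 + 1)) (p w : Fin (n - 2 * r + 1))
    (hw : (w : ℕ) + 1 < n - 2 * r + 1) (c : k) :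
    Pi.single r (Matrix.single p w c) * blockE k v n =
      Pi.single r (Matrix.single p ⟨w + 1, hw⟩ (c * qintN v (n - 2 * r - w))) := by
  rw [← Pi.single_mul_left]
  congr 1
  ext x y
  by_cases hx : x = p
  · subst hx
    simp only [Matrix.single_mul_apply_same, blockE, Matrix.of_apply, Matrix.single_apply,
      Fin.ext_iff, true_and]
    split_ifs <;> first | rfl | omega | simp_all
  · simp [Matrix.mul_apply, Ne.symm hx]

lemma single_mem_of_corner_mem {A : Subalgebra k (Blocks k n)} (hq : qfact v n ≠ 0)
    (hE : blockE k v n ∈ A) (hF : blockF k v n ∈ A) {r : Fin (n / 2 + 1)}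
    (hcorner : Pi.single r (Matrix.single 0 0 1) ∈ A) (p q : Fin (n - 2 * r + 1)) (c : k) :
    Pi.single r (Matrix.single p q c) ∈ A := by
  have hcol (a : ℕ) (ha : a < n - 2 * r + 1) (c : k) :
      Pi.single r (Matrix.single ⟨a, ha⟩ 0 c) ∈ A := by
    induction a generalizing c with
    | zero =>
      have h := A.smul_mem hcorner c
      rwa [← Pi.single_smul, Matrix.smul_single, smul_eq_mul, mul_one] at h
    | succ a ih =>
      have hne : qintN v (a + 1) ≠ 0 := qintN_ne_zero_of_qfact_ne_zero hq (by omega) (by omega)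
      have h := A.mul_mem hF (ih (by omega) ((qintN v (a + 1))⁻¹ * c))
      rwa [blockF_mul_single _ _ _ ha, mul_inv_cancel_left₀ hne] at h
  have hrow (b : ℕ) (hb : b < n - 2 * r + 1) (c : k) :
      Pi.single r (Matrix.single p ⟨b, hb⟩ c) ∈ A := by
    induction b generalizing c with
    | zero => exact hcol p p.isLt c
    | succ b ih =>
      have hne : qintN v (n - 2 * r - b) ≠ 0 :=
        qintN_ne_zero_of_qfact_ne_zero hq (by omega) (by omega)
      have h := A.mul_mem (ih (by omega) (c * (qintN v (n - 2 * r - b))⁻¹)) hE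
      rwa [single_mul_blockE _ _ _ hb, inv_mul_cancel_right₀ hne] at h
  exact hrow q q.isLt c

lemma blockUnit_weight_apply_self (r : Fin (n / 2 + 1)) :
    blockUnit k n (n - 2 * r) r = Matrix.single 0 0 1 := by
  ext p q
  simp only [blockUnit, Matrix.diagonal_apply, Matrix.single_apply, Fin.ext_iff, Fin.val_zero]
  split_ifs <;> first | rfl | omega

lemma blockUnit_weight_apply_of_lt {r r' : Fin (n / 2 + 1)} (h : r' < r) :
    blockUnit k n (n - 2 * r') r = 0 := by
  refine Matrix.diagonal_eq_zero.mpr (funext fun q => if_neg ?_)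
  rw [Fin.lt_def] at h
  omega

/-- Induction on the block: `1_{n-2r}` is the corner unit in block `r` and vanishes on the later
blocks, so modulo the earlier blocks it is that corner unit. -/
lemma eq_top_of_generators_mem {A : Subalgebra k (Blocks k n)} (hq : qfact v n ≠ 0)
    (hE : blockE k v n ∈ A) (hF : blockF k v n ∈ A) (hU : ∀ i, blockUnit k n i ∈ A) :
    A = ⊤ := by
  have hblock (r : Fin (n / 2 + 1)) (M : Matrix (Fin (n - 2 * r + 1)) (Fin (n - 2 * r + 1)) k) :
      Pi.single r M ∈ A := by
    induction r using WellFoundedLT.induction with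
    | ind r ih =>
      have hcorner : Pi.single r (Matrix.single 0 0 1) ∈ A := by
        have hsplit := Finset.add_sum_erase Finset.univ
          (fun r' => Pi.single r' (blockUnit k n (n - 2 * r) r')) (Finset.mem_univ r)
        rw [Finset.univ_sum_single, blockUnit_weight_apply_self] at hsplit
        rw [eq_sub_of_add_eq hsplit]
        refine A.sub_mem (hU _) (A.sum_mem fun r' hr' => ?_)
        rcases lt_or_gt_of_ne (Finset.ne_of_mem_erase hr') with h | h
        · exact ih r' h _
        · rw [blockUnit_weight_apply_of_lt h, Pi.single_zero]
          exact A.zero_mem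
      induction M using Matrix.induction_on' with
      | h_zero => simp [A.zero_mem]
      | h_add M N hM hN => simpa [Pi.single_add] using A.add_mem hM hN
      | h_std_basis p q c => exact single_mem_of_corner_mem hq hE hF hcorner p q c
  refine eq_top_iff.mpr fun x _ => ?_
  rw [← Finset.univ_sum_single x]
  exact A.sum_mem fun r _ => hblock r (x r)

lemma blockRep_surjective (hv : v ≠ 0) (hq : qfact v n ≠ 0) :
    Function.Surjective (blockRep v n hv) :=
  (AlgHom.range_eq_top _).mp <| eq_top_of_generators_mem hq ⟨_, blockRep_SE hv⟩
    ⟨_, blockRep_SF hv⟩ fun i => ⟨_, blockRep_Sunit hv i⟩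

end Surjective

abbrev BlockIndex (n : ℕ) := Σ r : Fin (n / 2 + 1), Fin (n - 2 * r + 1) × Fin (n - 2 * r + 1)

/-- The index `⟨r, p, q⟩` names the monomial `F^a 1_{n-2s} E^b` with `r = min a b`,
`p = s + a - r` and `q = s + b - r`; these are exactly the monomials with `s + a + b ≤ n`. -/
def indexedMonomial (v : k) (n : ℕ) (j : BlockIndex n) : SchurAlg k v n :=
  schurMonomial k v n (j.1 + (j.2.1 - j.2.2)) (n - 2 * (min j.2.1 j.2.2 : ℕ))
    (j.1 + (j.2.2 - j.2.1))

section Dimension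

variable {k} {v : k} {n : ℕ}

lemma span_range_indexedMonomial :
    Submodule.span k (Set.range (indexedMonomial k v n)) = ⊤ := by
  refine eq_top_iff.mpr (monomialSpan_eq_top (k := k) (v := v) (n := n) ▸
    Submodule.span_le.mpr ?_)
  rintro _ ⟨s, a, b, h, rfl⟩
  have hr : min a b < n / 2 + 1 := by omega
  refine Submodule.subset_span ⟨⟨⟨min a b, hr⟩, ⟨s + a - min a b, by simp only; omega⟩,
    ⟨s + b - min a b, by simp only; omega⟩⟩, ?_⟩
  simp only [indexedMonomial]
  congr 2 <;> omega

instance : Module.Finite k (SchurAlg k v n) :=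
  ⟨Submodule.fg_def.mpr ⟨_, Set.finite_range _, span_range_indexedMonomial⟩⟩

lemma finrank_blocks : Module.finrank k (Blocks k n) = Fintype.card (BlockIndex n) := by
  simp [Module.finrank_pi_fintype, Fintype.card_sigma, Module.finrank_matrix]

lemma blockRep_injective (hv : v ≠ 0) (hq : qfact v n ≠ 0) :
    Function.Injective (blockRep v n hv) := by
  have hsurj := blockRep_surjective hv hq
  have hdim : Module.finrank k (SchurAlg k v n) = Module.finrank k (Blocks k n) := by
    refine le_antisymm
      ((finrank_le_of_span_eq_top span_range_indexedMonomial).trans finrank_blocks.ge) ?_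
    have h := LinearMap.finrank_range_le (blockRep v n hv).toLinearMap
    rwa [LinearMap.range_eq_top.mpr hsurj, finrank_top] at h
  exact (LinearMap.injective_iff_surjective_of_finrank_eq_finrank
    (f := (blockRep v n hv).toLinearMap) hdim).mpr hsurj

end Dimension

/-- if `[n]! ≠ 0` then the quantum Schur algebra `S(n)` is a
semisimple ring. -/
theorem stmt_4 (k : Type*) [Field k] (v : k) (hv : v ≠ 0) (n : ℕ)
    (hq : qfact v n ≠ 0) :
    IsSemisimpleRing (SchurAlg k v n) :=
  (AlgEquiv.ofBijective (blockRep v n hv)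
    ⟨blockRep_injective hv hq, blockRep_surjective hv hq⟩).symm.toRingEquiv.isSemisimpleRing
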